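/- arXiv:1606.08797 — 3 statements merged into one kernel-verified Lean document; each statement's English description precedes it below -/
import Mathlib

section
/- For T in GL(2,ℝ) given by the matrix [[1,1],[0,1]], T is distal on ℝ² (i.e., for every nonzero v, the orbit closure of v under {Tⁿ : n ∈ ℤ} does not contain 0), but the induced map T̄(x) = T(x)/‖T(x)‖ on the unit circle S¹ is not distal. -/
/-!
Tⁿ is the shear `(a, b) ↦ (a + n b, b)`. It fixes the second coordinate and fixes every vector
whose second coordinate vanishes, so no orbit of a nonzero vector approaches `0`. On the circle,
however, Tⁿ e₁ = n e₀ + e₁ lies within distance `1` of `n e₀` while having norm at least `n`,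
so after normalizing, the images of `e₀` and `e₁` come within `2 / n` of each other.
-/

/-- The map `T̄(x) = T x / ‖T x‖` on the unit sphere. -/
noncomputable def nact {m : ℕ} (A : Matrix (Fin m) (Fin m) ℝ)
    (x : EuclideanSpace ℝ (Fin m)) : EuclideanSpace ℝ (Fin m) :=
  ‖Matrix.toEuclideanLin A x‖⁻¹ • Matrix.toEuclideanLin A x

theorem norm_inv_norm_smul_sub_inv_norm_smul_le {E : Type*} [NormedAddCommGroup E]
    [NormedSpace ℝ E] {u : E} (hu : u ≠ 0) (w : E) :
    ‖‖u‖⁻¹ • u - ‖w‖⁻¹ • w‖ ≤ 2 * ‖u - w‖ / ‖u‖ := by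
  have hu' : 0 < ‖u‖ := norm_pos_iff.mpr hu
  have hsplit : ‖u‖⁻¹ • u - ‖w‖⁻¹ • w = ‖u‖⁻¹ • (u - w) + (‖u‖⁻¹ - ‖w‖⁻¹) • w := by
    rw [smul_sub, sub_smul]; abel
  have hrescale : ‖(‖u‖⁻¹ - ‖w‖⁻¹) • w‖ ≤ ‖u - w‖ / ‖u‖ := by
    rcases eq_or_ne w 0 with rfl | hw
    · simp only [smul_zero, norm_zero]; positivity
    have hw' : 0 < ‖w‖ := norm_pos_iff.mpr hw
    have hscalar : (‖u‖⁻¹ - ‖w‖⁻¹) * ‖w‖ = (‖w‖ - ‖u‖) / ‖u‖ := by field_simp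
    calc ‖(‖u‖⁻¹ - ‖w‖⁻¹) • w‖ = |(‖u‖⁻¹ - ‖w‖⁻¹) * ‖w‖| := by
          rw [norm_smul, Real.norm_eq_abs, abs_mul, abs_norm]
      _ = |‖w‖ - ‖u‖| / ‖u‖ := by rw [hscalar, abs_div, abs_of_pos hu']
      _ ≤ ‖u - w‖ / ‖u‖ := by
          gcongr
          rw [abs_sub_comm]
          exact abs_norm_sub_norm_le u w
  calc ‖‖u‖⁻¹ • u - ‖w‖⁻¹ • w‖
      ≤ ‖‖u‖⁻¹ • (u - w)‖ + ‖(‖u‖⁻¹ - ‖w‖⁻¹) • w‖ := hsplit ▸ norm_add_le _ _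
    _ ≤ ‖u - w‖ / ‖u‖ + ‖u - w‖ / ‖u‖ := by
        gcongr
        rw [norm_smul, norm_inv, norm_norm, inv_mul_eq_div]
    _ = 2 * ‖u - w‖ / ‖u‖ := by ring

theorem zero_notMem_closure_of_le_norm {E : Type*} [SeminormedAddCommGroup E] {s : Set E}
    {c : ℝ} (hc : 0 < c) (h : ∀ w ∈ s, c ≤ ‖w‖) : (0 : E) ∉ closure s := fun h0 => by
  have : c ≤ ‖(0 : E)‖ := closure_minimal h (isClosed_le continuous_const continuous_norm) h0
  rw [norm_zero] at this
  exact hc.not_ge this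

local notation "e₀" => (EuclideanSpace.single 0 1 : EuclideanSpace ℝ (Fin 2))
local notation "e₁" => (EuclideanSpace.single 1 1 : EuclideanSpace ℝ (Fin 2))

def shear (t : ℝ) : Matrix (Fin 2) (Fin 2) ℝ := !![1, t; 0, 1]

theorem shear_zero : shear 0 = 1 := by
  rw [shear, Matrix.one_fin_two]

theorem shear_mul_shear (s t : ℝ) : shear s * shear t = shear (s + t) := by
  simp [shear, add_comm]

noncomputable def shearHom : Multiplicative ℝ →* GL (Fin 2) ℝ where
  toFun t := ⟨shear t.toAdd, shear (-t.toAdd),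
    by rw [shear_mul_shear, add_neg_cancel, shear_zero],
    by rw [shear_mul_shear, neg_add_cancel, shear_zero]⟩
  map_one' := Units.ext shear_zero
  map_mul' s t := Units.ext (shear_mul_shear s.toAdd t.toAdd).symm

theorem val_zpow_eq_shear {T : GL (Fin 2) ℝ} (hT : (T : Matrix (Fin 2) (Fin 2) ℝ) = shear 1)
    (n : ℤ) : ((T ^ n : GL (Fin 2) ℝ) : Matrix (Fin 2) (Fin 2) ℝ) = shear n := by
  have hT' : T = shearHom (Multiplicative.ofAdd 1) := Units.ext hT
  rw [hT', ← map_zpow, ← ofAdd_zsmul, zsmul_one]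
  rfl

theorem toEuclideanLin_shear_apply (t : ℝ) (v : EuclideanSpace ℝ (Fin 2)) :
    Matrix.toEuclideanLin (shear t) v = v + (t * v 1) • e₀ := by
  ext i
  fin_cases i <;> simp [shear, Matrix.toEuclideanLin, Matrix.mulVec, dotProduct, Fin.sum_univ_two]

theorem exists_pos_forall_le_norm_shear_apply {v : EuclideanSpace ℝ (Fin 2)} (hv : v ≠ 0) :
    ∃ c > 0, ∀ t : ℝ, c ≤ ‖Matrix.toEuclideanLin (shear t) v‖ := by
  by_cases hv1 : v 1 = 0
  · refine ⟨‖v‖, norm_pos_iff.mpr hv, fun t => ?_⟩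
    simp [toEuclideanLin_shear_apply, hv1]
  · refine ⟨|v 1|, abs_pos.mpr hv1, fun t => ?_⟩
    have hcoord : Matrix.toEuclideanLin (shear t) v 1 = v 1 := by
      simp [toEuclideanLin_shear_apply]
    simpa [hcoord] using PiLp.norm_apply_le (Matrix.toEuclideanLin (shear t) v) 1

theorem norm_nact_shear_sub_le {t : ℝ} (ht : 0 < t) :
    ‖nact (shear t) e₀ - nact (shear t) e₁‖ ≤ 2 / t := by
  set u := Matrix.toEuclideanLin (shear t) e₁
  set w : EuclideanSpace ℝ (Fin 2) := t • e₀
  have hnact_e₀ : nact (shear t) e₀ = ‖w‖⁻¹ • w := by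
    simp [w, nact, toEuclideanLin_shear_apply, norm_smul, abs_of_pos ht, smul_smul, ht.ne']
  have hu : u = e₁ + w := by simp [u, w, toEuclideanLin_shear_apply]
  have hu_ge : t ≤ ‖u‖ := by
    simpa [hu, w, abs_of_pos ht] using PiLp.norm_apply_le u 0
  have hu_ne : u ≠ 0 := norm_pos_iff.mp (ht.trans_le hu_ge)
  have hu_sub_w : ‖u - w‖ = 1 := by simp [hu]
  calc ‖nact (shear t) e₀ - nact (shear t) e₁‖
      = ‖‖u‖⁻¹ • u - ‖w‖⁻¹ • w‖ := by rw [hnact_e₀, norm_sub_rev]; rfl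
    _ ≤ 2 * ‖u - w‖ / ‖u‖ := norm_inv_norm_smul_sub_inv_norm_smul_le hu_ne w
    _ ≤ 2 / t := by
        rw [hu_sub_w, mul_one]
        gcongr

theorem stmt0 (T : GL (Fin 2) ℝ)
    (hT : (T : Matrix (Fin 2) (Fin 2) ℝ) = !![1, 1; 0, 1]) :
    (∀ v : EuclideanSpace ℝ (Fin 2), v ≠ 0 →
      (0 : EuclideanSpace ℝ (Fin 2)) ∉
        closure {w : EuclideanSpace ℝ (Fin 2) |
          ∃ n : ℤ, w = Matrix.toEuclideanLin ((T ^ n : GL (Fin 2) ℝ) : Matrix (Fin 2) (Fin 2) ℝ) v})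
    ∧
    ¬ (∀ x y : EuclideanSpace ℝ (Fin 2), ‖x‖ = 1 → ‖y‖ = 1 → x ≠ y →
        ∃ ε > (0:ℝ), ∀ n : ℤ,
          ε ≤ ‖nact ((T ^ n : GL (Fin 2) ℝ) : Matrix (Fin 2) (Fin 2) ℝ) x -
               nact ((T ^ n : GL (Fin 2) ℝ) : Matrix (Fin 2) (Fin 2) ℝ) y‖) := by
  refine ⟨fun v hv => ?_, fun hdistal => ?_⟩
  · obtain ⟨c, hc, hle⟩ := exists_pos_forall_le_norm_shear_apply hv
    refine zero_notMem_closure_of_le_norm hc ?_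
    rintro _ ⟨n, rfl⟩
    rw [val_zpow_eq_shear hT]
    exact hle n
  · have hne : e₀ ≠ e₁ := fun h => by simpa using congrArg (· 0) h
    obtain ⟨ε, hε, hle⟩ := hdistal _ _ (by simp) (by simp) hne
    obtain ⟨n, hn⟩ := exists_nat_gt (2 / ε)
    have hn_pos : (0 : ℝ) < n := (div_pos two_pos hε).trans hn
    have hfar := hle n
    rw [val_zpow_eq_shear hT, Int.cast_natCast] at hfar
    have h2n : 2 / (n : ℝ) < ε := (div_lt_comm₀ hn_pos hε).mpr hn
    exact hfar.not_gt ((norm_nact_shear_sub_le hn_pos).trans_lt h2n)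
end

section
/- Let 𝔖 ⊆ GL(n+1,ℝ) be a semigroup such that the closure of 𝔖·𝒟/𝒟 in GL(n+1,ℝ)/𝒟 is a compact group, where 𝒟 = {r·Id : r ∈ ℝ, r ≠ 0} is the center of GL(n+1,ℝ). Then 𝔖 acts distally on Sⁿ via T·x = T(x)/‖T(x)‖. -/
noncomputable def clm (m : ℕ) :
    Matrix (Fin m) (Fin m) ℝ →ₗ[ℝ] (EuclideanSpace ℝ (Fin m) →L[ℝ] EuclideanSpace ℝ (Fin m)) :=
  (LinearMap.toContinuousLinearMap.toLinearMap).comp Matrix.toEuclideanLin.toLinearMap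

lemma clm_mul {m : ℕ} (A B : Matrix (Fin m) (Fin m) ℝ) (v : EuclideanSpace ℝ (Fin m)) :
    clm m (A*B) v = clm m A (clm m B v) := by
  show Matrix.toEuclideanLin (A*B) v = Matrix.toEuclideanLin A (Matrix.toEuclideanLin B v)
  simp [Matrix.toEuclideanLin_apply]

lemma clm_inv_apply {m : ℕ} (T : GL (Fin m) ℝ) (z : EuclideanSpace ℝ (Fin m)) :
    clm m (↑T⁻¹ : Matrix (Fin m) (Fin m) ℝ) (clm m (↑T) z) = z := by
  rw [← clm_mul, Units.inv_mul]
  show Matrix.toEuclideanLin 1 z = z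
  simp [Matrix.toEuclideanLin_apply]

noncomputable def kap (m : ℕ) (T : GL (Fin m) ℝ) : ℝ :=
  ‖clm m (↑T : Matrix (Fin m) (Fin m) ℝ)‖ * ‖clm m (↑T⁻¹ : Matrix (Fin m) (Fin m) ℝ)‖

lemma keybound {m : ℕ} (T : GL (Fin m) ℝ) (x y : EuclideanSpace ℝ (Fin m))
    (hx : ‖x‖ = 1) (hy : ‖y‖ = 1) :
    ‖x - (inner ℝ y x : ℝ) • y‖ ≤
      kap m T * ‖nact (↑T : Matrix (Fin m) (Fin m) ℝ) x - nact (↑T : Matrix (Fin m) (Fin m) ℝ) y‖ := by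
  set L := clm m (↑T : Matrix (Fin m) (Fin m) ℝ) with hL
  set L' := clm m (↑T⁻¹ : Matrix (Fin m) (Fin m) ℝ) with hL'
  have hLL' : ∀ z, L' (L z) = z := clm_inv_apply T
  set u := L x with hu
  set v := L y with hv
  have hu0 : u ≠ 0 := by
    intro h
    have : x = 0 := by rw [← hLL' x, ← hu, h, map_zero]
    rw [this] at hx; simp at hx
  have hv0 : v ≠ 0 := by
    intro h
    have : y = 0 := by rw [← hLL' y, ← hv, h, map_zero]
    rw [this] at hy; simp at hy
  have hnu : (0:ℝ) < ‖u‖ := norm_pos_iff.2 hu0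
  have hnv : (0:ℝ) < ‖v‖ := norm_pos_iff.2 hv0
  have hnx : nact (↑T : Matrix (Fin m) (Fin m) ℝ) x = ‖u‖⁻¹ • u := rfl
  have hny : nact (↑T : Matrix (Fin m) (Fin m) ℝ) y = ‖v‖⁻¹ • v := rfl
  set d := ‖(‖u‖⁻¹ • u : EuclideanSpace ℝ (Fin m)) - ‖v‖⁻¹ • v‖ with hd
  have hd0 : 0 ≤ d := norm_nonneg _
  have step1 : ‖(‖v‖ • u : EuclideanSpace ℝ (Fin m)) - ‖u‖ • v‖ = ‖u‖ * ‖v‖ * d := by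
    have : (‖v‖ • u : EuclideanSpace ℝ (Fin m)) - ‖u‖ • v
        = (‖u‖ * ‖v‖) • ((‖u‖⁻¹ • u : EuclideanSpace ℝ (Fin m)) - ‖v‖⁻¹ • v) := by
      rw [smul_sub, smul_smul, smul_smul]
      congr 2 <;> field_simp
    rw [this, norm_smul, Real.norm_eq_abs, abs_of_pos (by positivity)]
  have step2 : (‖v‖ • x : EuclideanSpace ℝ (Fin m)) - ‖u‖ • y
      = L' ((‖v‖ • u : EuclideanSpace ℝ (Fin m)) - ‖u‖ • v) := by
    rw [map_sub, L'.map_smul, L'.map_smul, hLL', hLL']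
  have step3 : ‖(‖v‖ • x : EuclideanSpace ℝ (Fin m)) - ‖u‖ • y‖ ≤ ‖L'‖ * (‖u‖ * ‖v‖ * d) := by
    rw [step2, ← step1]
    exact L'.le_opNorm _
  set t := (inner ℝ y x : ℝ) with ht
  set s := ‖u‖ / ‖v‖ with hs
  have hsplit : (‖v‖ • x : EuclideanSpace ℝ (Fin m)) - ‖u‖ • y = ‖v‖ • (x - s • y) := by
    rw [smul_sub, smul_smul]
    congr 2
    rw [hs]
    field_simp
  have horth : (inner ℝ (x - t • y) y : ℝ) = 0 := by
    rw [inner_sub_left, real_inner_smul_left, real_inner_self_eq_norm_sq, hy, real_inner_comm]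
    ring
  have hdecomp : x - s • y = (x - t • y) + (t - s) • y := by
    rw [sub_smul]; abel
  have hlow : ‖x - t • y‖ ≤ ‖x - s • y‖ := by
    have hsq : ‖x - s • y‖^2 = ‖x - t • y‖^2 + ‖(t - s) • y‖^2 := by
      rw [hdecomp, norm_add_sq_real, real_inner_smul_right, horth]
      ring
    nlinarith [norm_nonneg (x - t • y), norm_nonneg (x - s • y), sq_nonneg ‖(t-s) • y‖]
  have hlow2 : ‖v‖ * ‖x - t • y‖ ≤ ‖L'‖ * (‖u‖ * ‖v‖ * d) := by
    calc ‖v‖ * ‖x - t • y‖ ≤ ‖v‖ * ‖x - s • y‖ :=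
          mul_le_mul_of_nonneg_left hlow hnv.le
      _ = ‖(‖v‖ • x : EuclideanSpace ℝ (Fin m)) - ‖u‖ • y‖ := by
          rw [hsplit, norm_smul, Real.norm_eq_abs, abs_of_pos hnv]
      _ ≤ ‖L'‖ * (‖u‖ * ‖v‖ * d) := step3
  have hub : ‖u‖ ≤ ‖L‖ := by
    have := L.le_opNorm x
    rwa [hx, mul_one] at this
  have hL'0 : 0 ≤ ‖L'‖ := norm_nonneg _
  rw [hnx, hny, ← hd]
  have : ‖v‖ * ‖x - t • y‖ ≤ ‖v‖ * ((‖L‖ * ‖L'‖) * d) := by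
    calc ‖v‖ * ‖x - t • y‖ ≤ ‖L'‖ * (‖u‖ * ‖v‖ * d) := hlow2
      _ ≤ ‖L'‖ * (‖L‖ * ‖v‖ * d) := by
          apply mul_le_mul_of_nonneg_left _ hL'0
          apply mul_le_mul_of_nonneg_right _ hd0
          exact mul_le_mul_of_nonneg_right hub hnv.le
      _ = ‖v‖ * ((‖L‖ * ‖L'‖) * d) := by ring
  exact le_of_mul_le_mul_left this hnv

lemma exists_bound (n : ℕ) (S : Subsemigroup (GL (Fin (n+1)) ℝ)) (D : Subgroup (GL (Fin (n+1)) ℝ))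
    (hD : ∀ A : GL (Fin (n + 1)) ℝ, A ∈ D ↔
      ∃ r : ℝ, r ≠ 0 ∧ (A : Matrix (Fin (n + 1)) (Fin (n + 1)) ℝ) = r • 1)
    (hcpt : IsCompact (closure ((QuotientGroup.mk : GL (Fin (n + 1)) ℝ → GL (Fin (n + 1)) ℝ ⧸ D) '' S))) :
    ∃ c > 0, ∀ T ∈ S, kap (n+1) T ≤ c := by
  by_cases hS : (S : Set (GL (Fin (n+1)) ℝ)).Nonempty
  · have hinv : ∀ a b : GL (Fin (n+1)) ℝ, (QuotientGroup.leftRel D) a b →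
        kap (n+1) a = kap (n+1) b := by
      intro a b hab
      rw [QuotientGroup.leftRel_apply] at hab
      obtain ⟨r, hr, hrval⟩ := (hD _).1 hab
      obtain ⟨s, hs, hsval⟩ := (hD _).1 (inv_mem hab)
      have hb : b = a * (a⁻¹ * b) := by group
      have hbval : (↑b : Matrix (Fin (n+1)) (Fin (n+1)) ℝ) = r • ↑a := by
        conv_lhs => rw [hb]
        rw [Units.val_mul, hrval, Matrix.mul_smul, mul_one]
      have hbinv : (↑b⁻¹ : Matrix (Fin (n+1)) (Fin (n+1)) ℝ) = s • ↑a⁻¹ := by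
        have : b⁻¹ = (a⁻¹ * b)⁻¹ * a⁻¹ := by group
        rw [this, Units.val_mul, hsval, Matrix.smul_mul, one_mul]
      have hrs : r * s = 1 := by
        have h1 : ((a⁻¹ * b) * (a⁻¹ * b)⁻¹ : GL (Fin (n+1)) ℝ) = 1 := mul_inv_cancel _
        have h2 : ((r • 1 : Matrix (Fin (n+1)) (Fin (n+1)) ℝ) * (s • 1)) = 1 := by
          rw [← hrval, ← hsval, ← Units.val_mul, h1, Units.val_one]
        have h3 : ((r*s) • (1 : Matrix (Fin (n+1)) (Fin (n+1)) ℝ)) = 1 := by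
          calc ((r*s) • (1 : Matrix (Fin (n+1)) (Fin (n+1)) ℝ))
              = (r • (1 : Matrix (Fin (n+1)) (Fin (n+1)) ℝ)) * (s • 1) := by
                rw [Matrix.smul_mul, one_mul, smul_smul]
            _ = 1 := h2
        have := congrFun (congrFun h3 0) 0
        simpa using this
      unfold kap
      rw [hbval, hbinv, LinearMap.map_smul, LinearMap.map_smul, norm_smul, norm_smul]
      have habs : |r| * |s| = 1 := by rw [← abs_mul, hrs, abs_one]
      simp only [Real.norm_eq_abs]
      calc ‖clm (n+1) ↑a‖ * ‖clm (n+1) ↑a⁻¹‖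
          = (|r| * |s|) * (‖clm (n+1) ↑a‖ * ‖clm (n+1) ↑a⁻¹‖) := by rw [habs]; ring
        _ = |r| * ‖clm (n+1) ↑a‖ * (|s| * ‖clm (n+1) ↑a⁻¹‖) := by ring
    have hκcont : Continuous (kap (n+1)) := by
      apply Continuous.mul
      · exact (((clm (n+1)).continuous_of_finiteDimensional).comp Units.continuous_val).norm
      · exact (((clm (n+1)).continuous_of_finiteDimensional).comp Units.continuous_coe_inv).norm
    set F : GL (Fin (n + 1)) ℝ ⧸ D → ℝ := fun q => Quotient.liftOn' q (kap (n+1)) hinv with hF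
    have hFcont : Continuous F := hκcont.quotient_liftOn' hinv
    obtain ⟨T0, hT0⟩ := hS
    have hne : (closure ((QuotientGroup.mk : GL (Fin (n + 1)) ℝ → GL (Fin (n + 1)) ℝ ⧸ D) '' S)).Nonempty :=
      ⟨QuotientGroup.mk T0, subset_closure ⟨T0, hT0, rfl⟩⟩
    obtain ⟨q0, _, hq0⟩ := hcpt.exists_isMaxOn hne hFcont.continuousOn
    refine ⟨max (F q0) 1, lt_of_lt_of_le one_pos (le_max_right _ _), ?_⟩
    intro T hT
    have : kap (n+1) T = F (QuotientGroup.mk T) := rfl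
    rw [this]
    exact le_trans (hq0 (subset_closure ⟨T, hT, rfl⟩)) (le_max_left _ _)
  · exact ⟨1, one_pos, fun T hT => absurd (⟨T, hT⟩ : (S : Set (GL (Fin (n+1)) ℝ)).Nonempty) hS⟩

lemma nact_neg {m : ℕ} (A : Matrix (Fin m) (Fin m) ℝ) (y : EuclideanSpace ℝ (Fin m)) :
    nact A (-y) = - nact A y := by
  unfold nact
  rw [map_neg, norm_neg, smul_neg]

lemma norm_nact {m : ℕ} (T : GL (Fin m) ℝ) (y : EuclideanSpace ℝ (Fin m)) (hy : y ≠ 0) :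
    ‖nact (↑T : Matrix (Fin m) (Fin m) ℝ) y‖ = 1 := by
  have hv0 : Matrix.toEuclideanLin (↑T : Matrix (Fin m) (Fin m) ℝ) y ≠ 0 := by
    intro h
    apply hy
    have := clm_inv_apply T y
    rw [show clm m (↑T : Matrix (Fin m) (Fin m) ℝ) y
        = Matrix.toEuclideanLin (↑T : Matrix (Fin m) (Fin m) ℝ) y from rfl, h, map_zero] at this
    exact this.symm
  unfold nact
  rw [norm_smul, Real.norm_eq_abs, abs_of_nonneg (inv_nonneg.2 (norm_nonneg _)), inv_mul_cancel₀ (norm_ne_zero_iff.2 hv0)]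

theorem stmt5 (n : ℕ) (S : Subsemigroup (GL (Fin (n + 1)) ℝ))
    (D : Subgroup (GL (Fin (n + 1)) ℝ)) [D.Normal]
    (hD : ∀ A : GL (Fin (n + 1)) ℝ, A ∈ D ↔
      ∃ r : ℝ, r ≠ 0 ∧ (A : Matrix (Fin (n + 1)) (Fin (n + 1)) ℝ) = r • 1)
    (hcpt : IsCompact (closure ((QuotientGroup.mk : GL (Fin (n + 1)) ℝ → GL (Fin (n + 1)) ℝ ⧸ D) '' S)))
    (hgrp : ∃ H : Subgroup (GL (Fin (n + 1)) ℝ ⧸ D),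
      (H : Set (GL (Fin (n + 1)) ℝ ⧸ D)) =
        closure ((QuotientGroup.mk : GL (Fin (n + 1)) ℝ → GL (Fin (n + 1)) ℝ ⧸ D) '' S)) :
    ∀ x y : EuclideanSpace ℝ (Fin (n + 1)), ‖x‖ = 1 → ‖y‖ = 1 → x ≠ y →
      ∀ p ∈ closure {q : EuclideanSpace ℝ (Fin (n + 1)) × EuclideanSpace ℝ (Fin (n + 1)) |
          ∃ T ∈ S, q = (nact (T : Matrix (Fin (n + 1)) (Fin (n + 1)) ℝ) x,
                        nact (T : Matrix (Fin (n + 1)) (Fin (n + 1)) ℝ) y)},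
        p.1 ≠ p.2 := by
  intro x y hx hy hxy p hp
  obtain ⟨c, hc0, hbnd⟩ := exists_bound n S D hD hcpt
  have hx0 : x ≠ 0 := fun h => by rw [h] at hx; simp at hx
  have hy0 : y ≠ 0 := fun h => by rw [h] at hy; simp at hy
  -- uniform lower bound
  have hε : ∃ ε > 0, ∀ T ∈ S,
      ε ≤ ‖nact (↑T : Matrix (Fin (n+1)) (Fin (n+1)) ℝ) x
          - nact (↑T : Matrix (Fin (n+1)) (Fin (n+1)) ℝ) y‖ := by
    by_cases hδ : ‖x - (inner ℝ y x : ℝ) • y‖ = 0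
    · -- antipodal case : x = -y
      have hxy' : x = (inner ℝ y x : ℝ) • y := by
        have := norm_eq_zero.1 hδ
        linear_combination (norm := module) this
      have habs : |(inner ℝ y x : ℝ)| = 1 := by
        have : ‖x‖ = |(inner ℝ y x : ℝ)| * ‖y‖ := by
          conv_lhs => rw [hxy']
          rw [norm_smul, Real.norm_eq_abs]
        rw [hx, hy, mul_one] at this
        exact this.symm
      have hneg : (inner ℝ y x : ℝ) = -1 := by
        rcases abs_eq (zero_le_one) |>.1 habs with h | h
        · exfalso; apply hxy; rw [hxy', h, one_smul]
        · exact h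
      have hxny : x = -y := by rw [hxy', hneg, neg_one_smul]
      refine ⟨2, two_pos, fun T _ => ?_⟩
      rw [hxny, nact_neg]
      rw [show (- nact (↑T : Matrix (Fin (n+1)) (Fin (n+1)) ℝ) y)
          - nact (↑T : Matrix (Fin (n+1)) (Fin (n+1)) ℝ) y
          = -((2:ℝ) • nact (↑T : Matrix (Fin (n+1)) (Fin (n+1)) ℝ) y) by module]
      rw [norm_neg, norm_smul, norm_nact T y hy0]
      norm_num
    · refine ⟨‖x - (inner ℝ y x : ℝ) • y‖ / c, by positivity, fun T hT => ?_⟩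
      rw [div_le_iff₀ hc0]
      calc ‖x - (inner ℝ y x : ℝ) • y‖
          ≤ kap (n+1) T * ‖nact (↑T : Matrix (Fin (n+1)) (Fin (n+1)) ℝ) x
              - nact (↑T : Matrix (Fin (n+1)) (Fin (n+1)) ℝ) y‖ := keybound T x y hx hy
        _ ≤ ‖nact (↑T : Matrix (Fin (n+1)) (Fin (n+1)) ℝ) x
              - nact (↑T : Matrix (Fin (n+1)) (Fin (n+1)) ℝ) y‖ * c := by
            rw [mul_comm]
            exact mul_le_mul_of_nonneg_left (hbnd T hT) (norm_nonneg _)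
  obtain ⟨ε, hε0, hεle⟩ := hε
  have hclosed : IsClosed {q : EuclideanSpace ℝ (Fin (n + 1)) × EuclideanSpace ℝ (Fin (n + 1)) |
      ε ≤ ‖q.1 - q.2‖} :=
    isClosed_le continuous_const ((continuous_fst.sub continuous_snd).norm)
  have hsub : closure {q : EuclideanSpace ℝ (Fin (n + 1)) × EuclideanSpace ℝ (Fin (n + 1)) |
          ∃ T ∈ S, q = (nact (T : Matrix (Fin (n + 1)) (Fin (n + 1)) ℝ) x,
                        nact (T : Matrix (Fin (n + 1)) (Fin (n + 1)) ℝ) y)} ⊆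
      {q : EuclideanSpace ℝ (Fin (n + 1)) × EuclideanSpace ℝ (Fin (n + 1)) | ε ≤ ‖q.1 - q.2‖} := by
    apply closure_minimal _ hclosed
    rintro q ⟨T, hT, rfl⟩
    exact hεle T hT
  have hpε : ε ≤ ‖p.1 - p.2‖ := hsub hp
  intro h
  rw [h, sub_self, norm_zero] at hpε
  linarith
end

section
/- Let T ∈ GL(n+1,ℝ) with det T = ±1, and suppose the cyclic semigroup {Tᵐ : m ∈ ℕ} acts distally on Sⁿ via T·x = T(x)/‖T(x)‖. Then {Tᵐ : m ∈ ℕ} is relatively compact in GL(n+1,ℝ). -/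
open Matrix Bornology Filter Topology NormedSpace

attribute [local instance] Matrix.normedAddCommGroup Matrix.normedSpace

section Normalize

variable {E F : Type*} [NormedAddCommGroup E] [NormedSpace ℝ E]
  [NormedAddCommGroup F] [NormedSpace ℝ F]

theorem continuousAt_normalize {x : E} (hx : x ≠ 0) : ContinuousAt NormedSpace.normalize x :=
  (continuous_norm.continuousAt.inv₀ (norm_ne_zero_iff.mpr hx)).smul continuousAt_id

theorem norm_normalize_le (x : E) : ‖NormedSpace.normalize x‖ ≤ 1 := by
  rcases eq_or_ne x 0 with rfl | hx
  · simp
  · exact (norm_normalize_eq_one_iff.mpr hx).le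

theorem LinearMap.exists_ne_normalize_eq (f : E →ₗ[ℝ] F) {v x₀ : E} (hv : v ≠ 0)
    (hfv : f v = 0) (hfx₀ : f x₀ ≠ 0) :
    ∃ x y : E, ‖x‖ = 1 ∧ ‖y‖ = 1 ∧ x ≠ y ∧ f x ≠ 0 ∧
      NormedSpace.normalize (f x) = NormedSpace.normalize (f y) := by
  have hx₀ : x₀ ≠ 0 := by rintro rfl; exact hfx₀ f.map_zero
  set x := NormedSpace.normalize x₀
  have hfx : f x ≠ 0 := by
    simp only [x, NormedSpace.normalize, map_smul]
    exact smul_ne_zero (inv_ne_zero (norm_ne_zero_iff.mpr hx₀)) hfx₀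
  have hxv : x + v ≠ 0 := fun h => hfx (by simpa [hfv] using congrArg f h)
  have hfy : f (NormedSpace.normalize (x + v)) = ‖x + v‖⁻¹ • f x := by
    rw [NormedSpace.normalize, map_smul, map_add, hfv, add_zero]
  refine ⟨x, NormedSpace.normalize (x + v), norm_normalize_eq_one_iff.mpr hx₀,
    norm_normalize_eq_one_iff.mpr hxv, fun hxy => hv ?_, hfx, ?_⟩
  · have hxv_eq : ‖x + v‖ • x = x + v := by
      nth_rewrite 2 [hxy]
      exact norm_smul_normalize _
    have hvx : v = (‖x + v‖ - 1) • x := by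
      rw [sub_smul, one_smul, hxv_eq, add_sub_cancel_left]
    have hc : ‖x + v‖ - 1 = 0 := by
      have := congrArg f hvx
      rw [hfv, map_smul, eq_comm, smul_eq_zero] at this
      exact this.resolve_right hfx
    rw [hvx, hc, zero_smul]
  · rw [hfy, normalize_smul_of_pos (inv_pos.mpr (norm_pos_iff.mpr hxv))]

end Normalize

theorem Matrix.exists_tendsto_normalize_det_eq_zero {ι : Type*} [Fintype ι] [DecidableEq ι]
    [Nonempty ι] {A : ℕ → Matrix ι ι ℝ} {D : ℝ}
    (hA : Tendsto (fun k => ‖A k‖) atTop atTop) (hdet : ∀ k, |(A k).det| ≤ D) :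
    ∃ B : Matrix ι ι ℝ, ∃ φ : ℕ → ℕ, StrictMono φ ∧ ‖B‖ = 1 ∧ B.det = 0 ∧
      Tendsto (fun k => NormedSpace.normalize (A (φ k))) atTop (𝓝 B) := by
  obtain ⟨B, -, φ, hφ, hlim⟩ := (isCompact_closedBall (0 : Matrix ι ι ℝ) 1).tendsto_subseq
    (x := fun k => NormedSpace.normalize (A k))
    fun k => mem_closedBall_zero_iff.mpr (norm_normalize_le _)
  have hAφ := hA.comp hφ.tendsto_atTop
  have hnorm : ∀ᶠ k in atTop, ‖NormedSpace.normalize (A (φ k))‖ = 1 :=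
    (hAφ.eventually_gt_atTop 0).mono fun _ hk => norm_normalize_eq_one_iff.mpr (norm_pos_iff.mp hk)
  have hdet0 : Tendsto (fun k => (NormedSpace.normalize (A (φ k))).det) atTop (𝓝 0) := by
    have hpow : Tendsto (fun k => ‖A (φ k)‖⁻¹ ^ Fintype.card ι * D) atTop (𝓝 0) := by
      simpa [zero_pow Fintype.card_ne_zero] using
        (hAφ.inv_tendsto_atTop.pow (Fintype.card ι)).mul_const D
    refine squeeze_zero_norm (fun k => ?_) hpow
    rw [NormedSpace.normalize, det_smul, Real.norm_eq_abs, abs_mul, abs_pow, abs_inv, abs_norm]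
    exact mul_le_mul_of_nonneg_left (hdet _) (by positivity)
  exact ⟨B, φ, hφ, tendsto_nhds_unique_of_eventuallyEq hlim.norm tendsto_const_nhds hnorm,
    tendsto_nhds_unique ((continuous_id.matrix_det.tendsto B).comp hlim) hdet0, hlim⟩

section Nact

variable {m : ℕ}

theorem nact_eq_normalize (A : Matrix (Fin m) (Fin m) ℝ) (x : EuclideanSpace ℝ (Fin m)) :
    nact A x = NormedSpace.normalize (toEuclideanLin A x) := rfl

theorem nact_normalize (A : Matrix (Fin m) (Fin m) ℝ) (x : EuclideanSpace ℝ (Fin m)) :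
    nact (NormedSpace.normalize A) x = nact A x := by
  rcases eq_or_ne A 0 with rfl | hA
  · simp
  · rw [nact_eq_normalize, nact_eq_normalize,
      show NormedSpace.normalize A = ‖A‖⁻¹ • A from rfl, map_smul, LinearMap.smul_apply,
      normalize_smul_of_pos (inv_pos.mpr (norm_pos_iff.mpr hA))]

theorem continuousAt_nact {B : Matrix (Fin m) (Fin m) ℝ} {x : EuclideanSpace ℝ (Fin m)}
    (hx : toEuclideanLin B x ≠ 0) : ContinuousAt (fun A => nact A x) B := by
  have : Continuous fun A : Matrix (Fin m) (Fin m) ℝ => toEuclideanLin A x :=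
    (PiLp.continuous_toLp 2 _).comp (continuous_id.matrix_mulVec continuous_const)
  exact (continuousAt_normalize hx).comp (f := fun A => toEuclideanLin A x) this.continuousAt

theorem Matrix.exists_ne_nact_eq {B : Matrix (Fin m) (Fin m) ℝ} (hB : B ≠ 0)
    (hdet : B.det = 0) :
    ∃ x y : EuclideanSpace ℝ (Fin m), ‖x‖ = 1 ∧ ‖y‖ = 1 ∧ x ≠ y ∧
      toEuclideanLin B x ≠ 0 ∧ toEuclideanLin B y ≠ 0 ∧ nact B x = nact B y := by
  obtain ⟨v, hv, hBv⟩ := exists_mulVec_eq_zero_iff.mpr hdet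
  obtain ⟨x₀, hx₀⟩ : ∃ x₀, toEuclideanLin B x₀ ≠ 0 := by
    by_contra! h
    exact hB (toEuclideanLin.map_eq_zero_iff.mp (LinearMap.ext h))
  obtain ⟨x, y, hx, hy, hxy, hBx, hBxy⟩ := (toEuclideanLin B).exists_ne_normalize_eq
    (v := WithLp.toLp 2 v) (by simpa using hv) (congrArg (WithLp.toLp 2) hBv) hx₀
  refine ⟨x, y, hx, hy, hxy, hBx, ?_, hBxy⟩
  intro hBy
  rw [hBy, normalize_zero_eq_zero, normalize_eq_zero_iff] at hBxy
  exact hBx hBxy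

theorem Matrix.isBounded_of_forall_le_norm_nact_sub [NeZero m]
    {S : Set (Matrix (Fin m) (Fin m) ℝ)} {D : ℝ} (hdet : ∀ A ∈ S, |A.det| ≤ D)
    (hsep : ∀ x y : EuclideanSpace ℝ (Fin m), ‖x‖ = 1 → ‖y‖ = 1 → x ≠ y →
      ∃ ε > (0 : ℝ), ∀ A ∈ S, ε ≤ ‖nact A x - nact A y‖) :
    IsBounded S := by
  by_contra hS
  obtain ⟨A, hAS, hA⟩ : ∃ A : ℕ → Matrix (Fin m) (Fin m) ℝ, (∀ k, A k ∈ S) ∧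
      Tendsto (fun k => ‖A k‖) atTop atTop := by
    simp only [isBounded_iff_forall_norm_le, not_exists, not_forall, not_le] at hS
    choose A hAS hA using fun k : ℕ => hS k
    exact ⟨A, hAS, tendsto_atTop_mono (fun k => (hA k).le) tendsto_natCast_atTop_atTop⟩
  obtain ⟨B, φ, -, hB, hBdet, hlim⟩ :=
    exists_tendsto_normalize_det_eq_zero hA fun k => hdet _ (hAS k)
  obtain ⟨x, y, hx, hy, hxy, hBx, hBy, hBxy⟩ :=
    exists_ne_nact_eq (by rintro rfl; simp at hB) hBdet
  obtain ⟨ε, hε, hεS⟩ := hsep x y hx hy hxy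
  have hdist : Tendsto (fun k => ‖nact (A (φ k)) x - nact (A (φ k)) y‖) atTop (𝓝 0) := by
    simp only [← nact_normalize (A _)]
    simpa [hBxy] using (((continuousAt_nact hBx).tendsto.comp hlim).sub
      ((continuousAt_nact hBy).tendsto.comp hlim)).norm
  have : ε ≤ 0 := ge_of_tendsto' hdist fun k => hεS _ (hAS _)
  linarith

end Nact

theorem Matrix.GeneralLinearGroup.isCompact_closure {ι : Type*} [Fintype ι] [DecidableEq ι]
    {S : Set (GL ι ℝ)} (hS : IsCompact (closure ((↑) '' S : Set (Matrix ι ι ℝ))))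
    {δ : ℝ} (hδ : 0 < δ) (hdet : ∀ u ∈ S, δ ≤ |(u : Matrix ι ι ℝ).det|) :
    IsCompact (closure S) := by
  set K := closure ((↑) '' S : Set (Matrix ι ι ℝ)) ∩ {A | δ ≤ |A.det|}
  have hK : IsCompact K :=
    hS.inter_right (isClosed_le continuous_const continuous_id.matrix_det.abs)
  have hinv : ContinuousOn Inv.inv K := fun A hA =>
    (continuousAt_matrix_inv A (by
      rw [Ring.inverse_eq_inv']
      exact continuousAt_inv₀ (abs_pos.mp (hδ.trans_le hA.2)))).continuousWithinAt
  have hC := Units.isClosedEmbedding_embedProduct.isCompact_preimage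
    (hK.prod ((hK.image_of_continuousOn hinv).image MulOpposite.continuous_op))
  refine hC.of_isClosed_subset isClosed_closure (closure_minimal (fun u hu => ?_) hC.isClosed)
  have huK : (u : Matrix ι ι ℝ) ∈ K := ⟨subset_closure ⟨u, hu, rfl⟩, hdet u hu⟩
  exact ⟨huK, _, ⟨u, huK, (coe_units_inv u).symm⟩, rfl⟩

theorem stmt7 (n : ℕ) (T : GL (Fin (n + 1)) ℝ)
    (hdet : |(T : Matrix (Fin (n + 1)) (Fin (n + 1)) ℝ).det| = 1)
    (hdistal : ∀ x y : EuclideanSpace ℝ (Fin (n + 1)), ‖x‖ = 1 → ‖y‖ = 1 → x ≠ y →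
      ∃ ε > (0 : ℝ), ∀ m : ℕ,
        ε ≤ ‖nact ((T ^ (m + 1) : GL (Fin (n + 1)) ℝ) : Matrix (Fin (n + 1)) (Fin (n + 1)) ℝ) x -
             nact ((T ^ (m + 1) : GL (Fin (n + 1)) ℝ) : Matrix (Fin (n + 1)) (Fin (n + 1)) ℝ) y‖) :
    IsCompact (closure (Set.range fun m : ℕ => T ^ (m + 1))) := by
  have hdet_pow (m : ℕ) : |(↑(T ^ m) : Matrix (Fin (n + 1)) (Fin (n + 1)) ℝ).det| = 1 := by
    rw [Units.val_pow_eq_pow_val, det_pow, abs_pow, hdet, one_pow]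
  have hbdd : IsBounded (Set.range fun m : ℕ =>
      (↑(T ^ (m + 1)) : Matrix (Fin (n + 1)) (Fin (n + 1)) ℝ)) := by
    refine isBounded_of_forall_le_norm_nact_sub (D := 1) ?_ fun x y hx hy hxy => ?_
    · rintro _ ⟨m, rfl⟩
      exact (hdet_pow _).le
    · obtain ⟨ε, hε, h⟩ := hdistal x y hx hy hxy
      exact ⟨ε, hε, by rintro _ ⟨m, rfl⟩; exact h m⟩
  refine GeneralLinearGroup.isCompact_closure
    (by rw [← Set.range_comp]; exact hbdd.isCompact_closure) one_pos ?_
  rintro _ ⟨m, rfl⟩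
  exact (hdet_pow _).ge
end
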